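/- Case (a) of Theorem 1's proof: If in addition |⟪g, d⟫| < ε ‖g‖ ‖d‖ (i.e. −ε < Φ(1) < ε), then P(0) > 0, P(1) < 0, and P has exactly one root in the open interval (0,1). -/
import Mathlib


open scoped RealInnerProductSpace

noncomputable def dvec {n : ℕ} (g d : EuclideanSpace ℝ (Fin n)) (ξ β : ℝ) :
    EuclideanSpace ℝ (Fin n) :=
  β • d - ((1 - β) * ξ) • g

noncomputable def Phi {n : ℕ} (g d : EuclideanSpace ℝ (Fin n)) (ξ β : ℝ) : ℝ :=
  -⟪g, dvec g d ξ β⟫ / (‖g‖ * ‖dvec g d ξ β‖)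

noncomputable def Ppoly {n : ℕ} (g d : EuclideanSpace ℝ (Fin n)) (ε ξ β : ℝ) : ℝ :=
  (⟪g, d⟫ ^ 2 - ε ^ 2 * ‖g‖ ^ 2 * ‖d‖ ^ 2
      - (-2 * (1 - ε ^ 2) * ξ * ‖g‖ ^ 2 * (ξ * ‖g‖ ^ 2 + ⟪g, d⟫))
      - (1 - ε ^ 2) * ξ ^ 2 * ‖g‖ ^ 4) * β ^ 2
    + (-2 * (1 - ε ^ 2) * ξ * ‖g‖ ^ 2 * (ξ * ‖g‖ ^ 2 + ⟪g, d⟫)) * β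
    + (1 - ε ^ 2) * ξ ^ 2 * ‖g‖ ^ 4

/-- Case (a) of Theorem 1's proof: if |⟪g, d⟫| < ε ‖g‖ ‖d‖ then P(0) > 0, P(1) < 0,
and P has exactly one root in (0,1). -/
theorem Ppoly_case_a {n : ℕ} (g d : EuclideanSpace ℝ (Fin n))
    (hind : LinearIndependent ℝ ![g, d]) (ε ξ : ℝ)
    (hε : ε ∈ Set.Ioo (0 : ℝ) 1) (hξ : 0 < ξ)
    (hviol : -⟪g, d⟫ < ε * ‖g‖ * ‖d‖)
    (habs : |⟪g, d⟫| < ε * ‖g‖ * ‖d‖) :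
    0 < Ppoly g d ε ξ 0 ∧ Ppoly g d ε ξ 1 < 0 ∧
    ∃! β : ℝ, β ∈ Set.Ioo (0 : ℝ) 1 ∧ Ppoly g d ε ξ β = 0 := by
  obtain ⟨hε0, hε1⟩ := hε
  have hg : g ≠ 0 := by
    have := hind.ne_zero 0
    simpa using this
  have hgn : 0 < ‖g‖ := norm_pos_iff.mpr hg
  obtain ⟨A, hA⟩ : ∃ A : ℝ, A = ⟪g, d⟫ ^ 2 - ε ^ 2 * ‖g‖ ^ 2 * ‖d‖ ^ 2
      - (-2 * (1 - ε ^ 2) * ξ * ‖g‖ ^ 2 * (ξ * ‖g‖ ^ 2 + ⟪g, d⟫))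
      - (1 - ε ^ 2) * ξ ^ 2 * ‖g‖ ^ 4 := ⟨_, rfl⟩
  obtain ⟨B, hB⟩ : ∃ B : ℝ, B = -2 * (1 - ε ^ 2) * ξ * ‖g‖ ^ 2 * (ξ * ‖g‖ ^ 2 + ⟪g, d⟫) := ⟨_, rfl⟩
  obtain ⟨C, hC⟩ : ∃ C : ℝ, C = (1 - ε ^ 2) * ξ ^ 2 * ‖g‖ ^ 4 := ⟨_, rfl⟩
  have hP : ∀ β : ℝ, Ppoly g d ε ξ β = A * β ^ 2 + B * β + C := by
    intro β; rw [hA, hB, hC]; rfl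
  have h1e : 0 < 1 - ε ^ 2 := by nlinarith
  have h0 : 0 < Ppoly g d ε ξ 0 := by
    rw [hP]
    have : 0 < C := by
      rw [hC]
      exact mul_pos (mul_pos h1e (pow_pos hξ 2)) (pow_pos hgn 4)
    nlinarith
  have habs' := abs_lt.mp habs
  have h1 : Ppoly g d ε ξ 1 < 0 := by
    rw [hP]
    have : A * 1 ^ 2 + B * 1 + C = ⟪g, d⟫ ^ 2 - ε ^ 2 * ‖g‖ ^ 2 * ‖d‖ ^ 2 := by
      rw [hA, hB, hC]; ring
    rw [this]
    nlinarith [habs'.1, habs'.2]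
  refine ⟨h0, h1, ?_⟩
  have hcont : ContinuousOn (fun β => Ppoly g d ε ξ β) (Set.Icc (0:ℝ) 1) := by
    simp only [hP]
    fun_prop
  have hsub := intermediate_value_Ioo' (le_of_lt one_pos) hcont
  have h0mem : (0 : ℝ) ∈ Set.Ioo (Ppoly g d ε ξ 1) (Ppoly g d ε ξ 0) := ⟨h1, h0⟩
  obtain ⟨β₀, hβ₀mem, hβ₀⟩ := hsub h0mem
  refine ⟨β₀, ⟨hβ₀mem, hβ₀⟩, ?_⟩
  rintro β₁ ⟨hm₁, he₁⟩
  by_contra hne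
  -- two distinct roots β₁ β₀ in (0,1)
  have e₁ : A * β₁ ^ 2 + B * β₁ + C = 0 := by rw [← hP]; exact he₁
  have e₀ : A * β₀ ^ 2 + B * β₀ + C = 0 := by rw [← hP]; exact hβ₀
  have hd : β₁ - β₀ ≠ 0 := sub_ne_zero.mpr hne
  have hsum : A * (β₁ + β₀) + B = 0 := by
    have hprod : (A * (β₁ + β₀) + B) * (β₁ - β₀) = 0 := by linear_combination e₁ - e₀
    exact (mul_eq_zero.mp hprod).resolve_right hd
  have hCa : C = A * (β₁ * β₀) := by linear_combination e₁ - β₁ * hsum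
  have hC0 : 0 < C := by have h := h0; rw [hP 0] at h; nlinarith
  have hA0 : 0 < A := by nlinarith [mul_pos hm₁.1 hβ₀mem.1, hCa, hC0]
  have h1' : A * 1 ^ 2 + B * 1 + C < 0 := by rw [← hP]; exact h1
  nlinarith [mul_pos (sub_pos.mpr hm₁.2) (sub_pos.mpr hβ₀mem.2), hsum, hCa]
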